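/- arXiv:1808.05366 — 3 statements merged into one kernel-verified Lean document; each statement's English description precedes it below -/
import Mathlib

section
/- Fix (ε1,ε2) ∈ (0,1)² with ε1+ε2 < 1, n ∈ ℕ and an (n,N1,N2)-code (f1,f2,g1,g2). Let D_{Y,n} := {(x^n,y^n) : g1(f1(x^n),y^n) = H0} and let C ⊆ D_{Y,n} be any set with P_XY^n(C) ≥ (1−ε1−ε2)/2, where P_XY^n is the n-fold i.i.d. product of P_XY. Let P̃ be the conditional distribution of P_XY^n given C, let (X̃^n,Ỹ^n) ~ P̃ and M̃1 := f1(X̃^n). Then −log β2 ≤ I(M̃1;Ỹ^n) + 2·log(2/(1−ε1−ε2)), where the mutual information is computed under the joint law of (M̃1,Ỹ^n) and β2 is the type-II error probability of the code at the relay. -/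
open scoped BigOperators Classical

noncomputable section

/-- Kullback–Leibler divergence between two pmfs on a finite set (natural log,
with the convention `0·log(0/q) = 0` encoded by the term vanishing). -/
def KL {Ω : Type} [Fintype Ω] (P Q : Ω → ℝ) : ℝ :=
  ∑ ω, P ω * Real.log (P ω / Q ω)

/-- `P` is a probability mass function on the finite set `Ω`. -/
def IsPMF {Ω : Type} [Fintype Ω] (P : Ω → ℝ) : Prop :=
  (∀ ω, 0 ≤ P ω) ∧ ∑ ω, P ω = 1

/-- Pushforward (law of `φ`) of the pmf `P` under the map `φ`. -/
def pushf {Ω A : Type} [Fintype Ω] (P : Ω → ℝ) (φ : Ω → A) : A → ℝ :=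
  fun a => ∑ ω, if φ ω = a then P ω else 0

/-- Mutual information `I(φA; φB)` under the pmf `P`. -/
def MIof {Ω A B : Type} [Fintype Ω] [Fintype A] [Fintype B]
    (P : Ω → ℝ) (φA : Ω → A) (φB : Ω → B) : ℝ :=
  KL (pushf P fun ω => (φA ω, φB ω)) (fun p => pushf P φA p.1 * pushf P φB p.2)

/-- Conditional mutual information `I(φA; φB | φC)` under the pmf `P`. -/
def CMIof {Ω A B C : Type} [Fintype Ω] [Fintype A] [Fintype B] [Fintype C]
    (P : Ω → ℝ) (φA : Ω → A) (φB : Ω → B) (φC : Ω → C) : ℝ :=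
  ∑ c, pushf P φC c *
    MIof (fun ω => if φC ω = c then P ω / pushf P φC c else 0) φA φB

/-- Markov chain `φA − φB − φC` under the pmf `P`:
`P_{ABC}(a,b,c) · P_B(b) = P_{AB}(a,b) · P_{BC}(b,c)`. -/
def MarkovChain {Ω A B C : Type} [Fintype Ω]
    (P : Ω → ℝ) (φA : Ω → A) (φB : Ω → B) (φC : Ω → C) : Prop :=
  ∀ a b c,
    pushf P (fun ω => (φA ω, φB ω, φC ω)) (a, b, c) * pushf P φB b
      = pushf P (fun ω => (φA ω, φB ω)) (a, b) *
        pushf P (fun ω => (φB ω, φC ω)) (b, c)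

/-- Marginal on `X` of a pmf on `X × Y × Z`. -/
def margX {X Y Z : Type} [Fintype X] [Fintype Y] [Fintype Z]
    (P : X × Y × Z → ℝ) : X → ℝ := pushf P (fun ω => ω.1)

/-- Marginal on `Y` of a pmf on `X × Y × Z`. -/
def margY {X Y Z : Type} [Fintype X] [Fintype Y] [Fintype Z]
    (P : X × Y × Z → ℝ) : Y → ℝ := pushf P (fun ω => ω.2.1)

/-- Marginal on `Z` of a pmf on `X × Y × Z`. -/
def margZ {X Y Z : Type} [Fintype X] [Fintype Y] [Fintype Z]
    (P : X × Y × Z → ℝ) : Z → ℝ := pushf P (fun ω => ω.2.2)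

/-- Marginal on `X × Y` of a pmf on `X × Y × Z`. -/
def margXY {X Y Z : Type} [Fintype X] [Fintype Y] [Fintype Z]
    (P : X × Y × Z → ℝ) : X × Y → ℝ := pushf P (fun ω => (ω.1, ω.2.1))

/-- Marginal on `Y × Z` of a pmf on `X × Y × Z`. -/
def margYZ {X Y Z : Type} [Fintype X] [Fintype Y] [Fintype Z]
    (P : X × Y × Z → ℝ) : Y × Z → ℝ := pushf P (fun ω => (ω.2.1, ω.2.2))

/-- The conditional pmf `P_{Z|Y}(z|y)` induced by a pmf on `X × Y × Z`. -/
def condZY {X Y Z : Type} [Fintype X] [Fintype Y] [Fintype Z]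
    (P : X × Y × Z → ℝ) (y : Y) (z : Z) : ℝ :=
  margYZ P (y, z) / margY P y

/-- The Markov chain `X − Y − Z` for the source distribution `P` on `X × Y × Z`. -/
def SourceMarkov {X Y Z : Type} [Fintype X] [Fintype Y] [Fintype Z]
    (P : X × Y × Z → ℝ) : Prop :=
  ∀ x y z, P (x, y, z) * margY P y = margXY P (x, y) * margYZ P (y, z)

/-- An `(n, N1, N2)`-code for hypothesis testing over a two-hop network.
The Boolean value `true` of the decoders stands for the hypothesis `H0`,
and `false` stands for `H1`. -/
structure Code (X Y Z : Type) (n N1 N2 : ℕ) where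
  f1 : (Fin n → X) → Fin N1
  f2 : Fin N1 → (Fin n → Y) → Fin N2
  g1 : Fin N1 → (Fin n → Y) → Bool
  g2 : Fin N2 → (Fin n → Z) → Bool

/-- Type-I error probability at the relay:
`P_XYZ^n {(x,y,z) : g1(f1(x), y) = H1}`. -/
def beta1 {X Y Z : Type} [Fintype X] [Fintype Y] [Fintype Z] {n N1 N2 : ℕ}
    (P : X × Y × Z → ℝ) (C : Code X Y Z n N1 N2) : ℝ :=
  ∑ x : Fin n → X, ∑ y : Fin n → Y, ∑ z : Fin n → Z,
    if C.g1 (C.f1 x) y = false then ∏ i, P (x i, y i, z i) else 0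

/-- Type-I error probability at the receiver:
`P_XYZ^n {(x,y,z) : g2(f2(f1(x), y), z) = H1}`. -/
def eta1 {X Y Z : Type} [Fintype X] [Fintype Y] [Fintype Z] {n N1 N2 : ℕ}
    (P : X × Y × Z → ℝ) (C : Code X Y Z n N1 N2) : ℝ :=
  ∑ x : Fin n → X, ∑ y : Fin n → Y, ∑ z : Fin n → Z,
    if C.g2 (C.f2 (C.f1 x) y) z = false then ∏ i, P (x i, y i, z i) else 0

/-- Type-II error probability at the relay:
`(P_X^n ⊗ P_Y^n ⊗ P_Z^n) {(x,y,z) : g1(f1(x), y) = H0}`. -/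
def beta2 {X Y Z : Type} [Fintype X] [Fintype Y] [Fintype Z] {n N1 N2 : ℕ}
    (P : X × Y × Z → ℝ) (C : Code X Y Z n N1 N2) : ℝ :=
  ∑ x : Fin n → X, ∑ y : Fin n → Y, ∑ z : Fin n → Z,
    if C.g1 (C.f1 x) y = true then
      (∏ i, margX P (x i)) * (∏ i, margY P (y i)) * (∏ i, margZ P (z i))
    else 0

/-- Type-II error probability at the receiver:
`(P_X^n ⊗ P_Y^n ⊗ P_Z^n) {(x,y,z) : g2(f2(f1(x), y), z) = H0}`. -/
def eta2 {X Y Z : Type} [Fintype X] [Fintype Y] [Fintype Z] {n N1 N2 : ℕ}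
    (P : X × Y × Z → ℝ) (C : Code X Y Z n N1 N2) : ℝ :=
  ∑ x : Fin n → X, ∑ y : Fin n → Y, ∑ z : Fin n → Z,
    if C.g2 (C.f2 (C.f1 x) y) z = true then
      (∏ i, margX P (x i)) * (∏ i, margY P (y i)) * (∏ i, margZ P (z i))
    else 0

end

noncomputable section

/-- The n-fold i.i.d. product `P_XY^n` evaluated at a pair of sequences. -/
def prodXY {X Y Z : Type} [Fintype X] [Fintype Y] [Fintype Z] {n : ℕ}
    (P : X × Y × Z → ℝ) (p : (Fin n → X) × (Fin n → Y)) : ℝ :=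
  ∏ i, margXY P (p.1 i, p.2 i)

/-- Type-II error probability at the relay:
`(P_X^n ⊗ P_Y^n) {(x,y) : g1(f1(x), y) = H0}`. -/
def beta2relay {X Y Z : Type} [Fintype X] [Fintype Y] [Fintype Z] {n N1 N2 : ℕ}
    (P : X × Y × Z → ℝ) (C : Code X Y Z n N1 N2) : ℝ :=
  ∑ x : Fin n → X, ∑ y : Fin n → Y,
    if C.g1 (C.f1 x) y = true then
      (∏ i, margX P (x i)) * (∏ i, margY P (y i))
    else 0

/-!
Let `P̃` be `P_XYⁿ` conditioned on `S`, of mass `q ≥ (1 - ε1 - ε2) / 2`. Both marginals of `P̃` are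
dominated by the corresponding marginals of `P_XYⁿ` times `1 / q`, so
`I(M̃1; Ỹⁿ) = D(P̃_{M̃1 Ỹⁿ} ‖ P̃_{M̃1} ⊗ P̃_{Ỹⁿ}) ≥ D(P̃_{M̃1 Ỹⁿ} ‖ P_{M1} ⊗ P_Yⁿ) + 2 log q`.
Since `P̃` lives on the acceptance region of the relay, Gibbs' inequality bounds the last
divergence below by minus the log of the `P_{M1} ⊗ P_Yⁿ`-mass of that region, which is `β2`.
-/

open Finset

section Pushforward

variable {Ω A B : Type} [Fintype Ω]

theorem pushf_nonneg {P : Ω → ℝ} (hP : ∀ ω, 0 ≤ P ω) (φ : Ω → A) (a : A) :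
    0 ≤ pushf P φ a :=
  sum_nonneg fun ω _ => by split_ifs <;> simp [hP ω]

theorem sum_mul_pushf [Fintype A] (g : A → ℝ) (P : Ω → ℝ) (φ : Ω → A) :
    ∑ a, g a * pushf P φ a = ∑ ω, g (φ ω) * P ω := by
  simp only [pushf, mul_sum, mul_ite, mul_zero]
  rw [sum_comm]
  simp

theorem sum_pushf [Fintype A] (P : Ω → ℝ) (φ : Ω → A) : ∑ a, pushf P φ a = ∑ ω, P ω := by
  simpa using sum_mul_pushf 1 P φ

theorem pushf_pushf [Fintype A] (P : Ω → ℝ) (φ : Ω → A) (ψ : A → B) :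
    pushf (pushf P φ) ψ = pushf P (ψ ∘ φ) := by
  ext b
  change (∑ a, if ψ a = b then pushf P φ a else 0) = ∑ ω, if ψ (φ ω) = b then P ω else 0
  simpa using sum_mul_pushf (fun a => if ψ a = b then (1 : ℝ) else 0) P φ

theorem pushf_fst_apply [Fintype A] [Fintype B] (P : A × B → ℝ) (a : A) :
    pushf P Prod.fst a = ∑ b, P (a, b) := by
  simp only [pushf, Fintype.sum_prod_type]
  rw [sum_comm]
  simp

theorem pushf_snd_apply [Fintype A] [Fintype B] (P : A × B → ℝ) (b : B) :
    pushf P Prod.snd b = ∑ a, P (a, b) := by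
  simp [pushf, Fintype.sum_prod_type]

theorem pushf_mono {P Q : Ω → ℝ} (h : ∀ ω, P ω ≤ Q ω) (φ : Ω → A) (a : A) :
    pushf P φ a ≤ pushf Q φ a :=
  sum_le_sum fun ω _ => by split_ifs <;> simp [h ω]

theorem pushf_div_const (P : Ω → ℝ) (c : ℝ) (φ : Ω → A) (a : A) :
    pushf (fun ω => P ω / c) φ a = pushf P φ a / c := by
  simp [pushf, sum_div, ite_div]

theorem pushf_pair_le_left {P : Ω → ℝ} (hP : ∀ ω, 0 ≤ P ω) (φ : Ω → A) (ψ : Ω → B)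
    (w : A × B) : pushf P (fun ω => (φ ω, ψ ω)) w ≤ pushf P φ w.1 :=
  sum_le_sum fun ω _ => by
    by_cases h : (φ ω, ψ ω) = w
    · simp [← h]
    · rw [if_neg h]; split_ifs <;> simp [hP ω]

theorem pushf_pair_le_right {P : Ω → ℝ} (hP : ∀ ω, 0 ≤ P ω) (φ : Ω → A) (ψ : Ω → B)
    (w : A × B) : pushf P (fun ω => (φ ω, ψ ω)) w ≤ pushf P ψ w.2 :=
  sum_le_sum fun ω _ => by
    by_cases h : (φ ω, ψ ω) = w
    · simp [← h]
    · rw [if_neg h]; split_ifs <;> simp [hP ω]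

theorem exists_pos_of_pushf_pos {P : Ω → ℝ} (hP : ∀ ω, 0 ≤ P ω) {φ : Ω → A} {a : A}
    (h : 0 < pushf P φ a) : ∃ ω, φ ω = a ∧ 0 < P ω := by
  obtain ⟨ω, -, hω⟩ := exists_ne_zero_of_sum_ne_zero h.ne'
  by_cases hφ : φ ω = a
  · exact ⟨ω, hφ, (hP ω).lt_of_ne' (by simpa [hφ] using hω)⟩
  · simp [hφ] at hω

theorem IsPMF.pushf {P : Ω → ℝ} (hP : IsPMF P) [Fintype A] (φ : Ω → A) : IsPMF (pushf P φ) :=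
  ⟨pushf_nonneg hP.1 φ, (sum_pushf P φ).trans hP.2⟩

theorem IsPMF.exists_pos {P : Ω → ℝ} (hP : IsPMF P) : ∃ ω, 0 < P ω := by
  by_contra! h
  have := sum_nonpos fun ω (_ : ω ∈ univ) => h ω
  linarith [hP.2]

end Pushforward

section Divergence

variable {Ω : Type} [Fintype Ω]

theorem KL_le_KL_of_le {P Q Q' : Ω → ℝ} (hP : ∀ ω, 0 ≤ P ω)
    (hQ : ∀ ω, 0 < P ω → 0 < Q ω ∧ Q ω ≤ Q' ω) : KL P Q' ≤ KL P Q :=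
  sum_le_sum fun ω _ => by
    rcases (hP ω).eq_or_lt with h0 | hpos
    · simp [← h0]
    · obtain ⟨hQpos, hle⟩ := hQ ω hpos
      gcongr
      exact div_pos hpos (hQpos.trans_le hle)

theorem neg_log_sum_le_KL {P Q : Ω → ℝ} (hP : IsPMF P) {T : Finset Ω}
    (hQ : ∀ ω ∈ T, 0 ≤ Q ω) (hsupp : ∀ ω, 0 < P ω → ω ∈ T ∧ 0 < Q ω) :
    -Real.log (∑ ω ∈ T, Q ω) ≤ KL P Q := by
  set c := ∑ ω ∈ T, Q ω
  have hc : 0 < c := by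
    obtain ⟨ω, hω⟩ := hP.exists_pos
    exact sum_pos' hQ ⟨ω, (hsupp ω hω).1, (hsupp ω hω).2⟩
  -- `1 - 1/x ≤ log x` at `x = P ω c / Q ω`
  have key : ∀ ω, P ω - (if ω ∈ T then Q ω else 0) / c
      ≤ P ω * Real.log (P ω / Q ω) + P ω * Real.log c := by
    intro ω
    rcases (hP.1 ω).eq_or_lt with h0 | hpos
    · rw [← h0]
      split_ifs with hT
      · simpa using div_nonneg (hQ ω hT) hc.le
      · simp
    · obtain ⟨hT, hQpos⟩ := hsupp ω hpos
      have hlog := Real.one_sub_inv_le_log_of_pos (x := P ω / Q ω * c)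
        (mul_pos (div_pos hpos hQpos) hc)
      rw [if_pos hT, ← mul_add, ← Real.log_mul (by positivity) hc.ne']
      calc P ω - Q ω / c = P ω * (1 - (P ω / Q ω * c)⁻¹) := by field_simp
        _ ≤ _ := by gcongr
  have hsum := sum_le_sum fun ω (_ : ω ∈ univ) => key ω
  rw [sum_sub_distrib, ← sum_div, sum_ite_mem, univ_inter, div_self hc.ne', sum_add_distrib,
    ← sum_mul, hP.2, one_mul] at hsum
  unfold KL
  linarith

end Divergence

section MutualInformation

variable {Ω A B : Type} [Fintype Ω] [Fintype A] [Fintype B]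

theorem neg_log_le_MIof_sub {P : Ω → ℝ} (hP : IsPMF P) {φA : Ω → A} {φB : Ω → B}
    {α : A → ℝ} {β : B → ℝ} {q : ℝ} (hq : 0 < q)
    (hα : ∀ a, pushf P φA a ≤ α a / q) (hβ : ∀ b, pushf P φB b ≤ β b / q)
    {T : Finset (A × B)} (hT : ∀ ω, 0 < P ω → (φA ω, φB ω) ∈ T) :
    -Real.log (∑ w ∈ T, α w.1 * β w.2) ≤ MIof P φA φB - 2 * Real.log q := by
  set R := pushf P fun ω => (φA ω, φB ω)
  have hR : IsPMF R := hP.pushf _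
  have hα0 : ∀ a, 0 ≤ α a := fun a => by
    simpa using (le_div_iff₀ hq).mp ((pushf_nonneg hP.1 φA a).trans (hα a))
  have hβ0 : ∀ b, 0 ≤ β b := fun b => by
    simpa using (le_div_iff₀ hq).mp ((pushf_nonneg hP.1 φB b).trans (hβ b))
  have hsupp : ∀ w, 0 < R w →
      w ∈ T ∧ 0 < pushf P φA w.1 * pushf P φB w.2 ∧
        pushf P φA w.1 * pushf P φB w.2 ≤ α w.1 * β w.2 / q ^ 2 := by
    intro w hw
    obtain ⟨ω, rfl, hω⟩ := exists_pos_of_pushf_pos hP.1 hw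
    refine ⟨hT ω hω, mul_pos (hw.trans_le (pushf_pair_le_left hP.1 φA φB _))
      (hw.trans_le (pushf_pair_le_right hP.1 φA φB _)), ?_⟩
    calc _ ≤ α (φA ω) / q * (β (φB ω) / q) :=
          mul_le_mul (hα _) (hβ _) (pushf_nonneg hP.1 φB _) (div_nonneg (hα0 _) hq.le)
      _ = _ := by ring
  have hKL : KL R (fun w => α w.1 * β w.2 / q ^ 2) ≤ MIof P φA φB :=
    KL_le_KL_of_le hR.1 fun w hw => ⟨(hsupp w hw).2.1, (hsupp w hw).2.2⟩
  have hGibbs := neg_log_sum_le_KL hR (T := T)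
    (fun w _ => div_nonneg (mul_nonneg (hα0 w.1) (hβ0 w.2)) (sq_nonneg q))
    fun w hw => ⟨(hsupp w hw).1, (hsupp w hw).2.1.trans_le (hsupp w hw).2.2⟩
  obtain ⟨w, hw⟩ := hR.exists_pos
  have hmass : 0 < ∑ w ∈ T, α w.1 * β w.2 :=
    sum_pos' (fun w _ => mul_nonneg (hα0 w.1) (hβ0 w.2))
      ⟨w, (hsupp w hw).1, (div_pos_iff_of_pos_right (pow_pos hq 2)).mp
        ((hsupp w hw).2.1.trans_le (hsupp w hw).2.2)⟩
  rw [← sum_div, Real.log_div hmass.ne' (by positivity), Real.log_pow] at hGibbs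
  push_cast at hGibbs
  linarith

end MutualInformation

section Conditioning

variable {Ω : Type} [Fintype Ω]

def condOn (Q : Ω → ℝ) (S : Set Ω) (ω : Ω) : ℝ :=
  (if ω ∈ S then Q ω else 0) / ∑ ω', if ω' ∈ S then Q ω' else 0

variable {Q : Ω → ℝ} {S : Set Ω}

theorem isPMF_condOn (hQ : ∀ ω, 0 ≤ Q ω) (hS : 0 < ∑ ω, if ω ∈ S then Q ω else 0) :
    IsPMF (condOn Q S) := by
  refine ⟨fun ω => div_nonneg (by split_ifs <;> simp [hQ ω]) hS.le, ?_⟩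
  simp only [condOn]
  rw [← sum_div, div_self hS.ne']

theorem condOn_le (hQ : ∀ ω, 0 ≤ Q ω) (ω : Ω) :
    condOn Q S ω ≤ Q ω / ∑ ω', if ω' ∈ S then Q ω' else 0 :=
  div_le_div_of_nonneg_right (by split_ifs <;> simp [hQ ω])
    (sum_nonneg fun ω' _ => by split_ifs <;> simp [hQ ω'])

theorem mem_of_condOn_pos {ω : Ω} (h : 0 < condOn Q S ω) : ω ∈ S := by
  by_contra hω
  simp [condOn, hω] at h

end Conditioning

theorem neg_log_le_MIof_condOn {U V M : Type} [Fintype U] [Fintype V] [Fintype M]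
    {Q : U × V → ℝ} (hQ : ∀ p, 0 ≤ Q p) {S : Set (U × V)}
    (hS : 0 < ∑ p, if p ∈ S then Q p else 0) (f : U → M) {T : Finset (M × V)}
    (hST : ∀ p ∈ S, (f p.1, p.2) ∈ T) :
    -Real.log (∑ w ∈ T, pushf (pushf Q Prod.fst) f w.1 * pushf Q Prod.snd w.2)
      ≤ MIof (condOn Q S) (fun p => f p.1) (fun p => p.2)
        - 2 * Real.log (∑ p, if p ∈ S then Q p else 0) := by
  refine neg_log_le_MIof_sub (isPMF_condOn hQ hS) hS (fun m => ?_) (fun v => ?_)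
    fun p hp => hST p (mem_of_condOn_pos hp)
  · rw [pushf_pushf, ← pushf_div_const]
    exact pushf_mono (condOn_le hQ) _ m
  · rw [← pushf_div_const]
    exact pushf_mono (condOn_le hQ) _ v

section SourceMarginals

variable {X Y Z : Type} [Fintype X] [Fintype Y] [Fintype Z] (P : X × Y × Z → ℝ)

theorem sum_margXY_right (a : X) : ∑ b, margXY P (a, b) = margX P a := by
  rw [← pushf_fst_apply, margXY, pushf_pushf]
  rfl

theorem sum_margXY_left (b : Y) : ∑ a, margXY P (a, b) = margY P b := by
  rw [← pushf_snd_apply, margXY, pushf_pushf]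
  rfl

variable {n : ℕ}

theorem pushf_prodXY_fst :
    pushf (prodXY P : (Fin n → X) × (Fin n → Y) → ℝ) Prod.fst = fun x => ∏ i, margX P (x i) := by
  ext x
  rw [pushf_fst_apply]
  simp only [prodXY, ← sum_margXY_right]
  exact (Fintype.prod_sum fun i b => margXY P (x i, b)).symm

theorem pushf_prodXY_snd :
    pushf (prodXY P : (Fin n → X) × (Fin n → Y) → ℝ) Prod.snd = fun y => ∏ i, margY P (y i) := by
  ext y
  rw [pushf_snd_apply]
  simp only [prodXY, ← sum_margXY_left]
  exact (Fintype.prod_sum fun i a => margXY P (a, y i)).symm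

theorem beta2relay_eq_sum_marginals {N1 N2 : ℕ} (C : Code X Y Z n N1 N2) :
    beta2relay P C = ∑ w ∈ univ.filter (fun w : Fin N1 × (Fin n → Y) => C.g1 w.1 w.2 = true),
      pushf (pushf (prodXY P) Prod.fst) C.f1 w.1 * pushf (prodXY P) Prod.snd w.2 := by
  rw [pushf_prodXY_fst, pushf_prodXY_snd, sum_filter, Fintype.sum_prod_type]
  calc beta2relay P C
      = ∑ x, (∑ y, if C.g1 (C.f1 x) y = true then ∏ i, margY P (y i) else 0)
          * ∏ i, margX P (x i) := by
        simp only [beta2relay, sum_mul, ite_mul, zero_mul]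
        simp only [mul_comm]
    _ = ∑ m, (∑ y, if C.g1 m y = true then ∏ i, margY P (y i) else 0)
          * pushf (fun x => ∏ i, margX P (x i)) C.f1 m :=
        (sum_mul_pushf (fun m => ∑ y, if C.g1 m y = true then ∏ i, margY P (y i) else 0) _ _).symm
    _ = _ := by
        simp only [sum_mul, ite_mul, zero_mul]
        simp only [mul_comm]

end SourceMarginals

theorem relay_exponent_bound_general
    (X Y Z : Type) [Fintype X] [Fintype Y] [Fintype Z]
    (P : X × Y × Z → ℝ) (hP : IsPMF P)
    (ε1 ε2 : ℝ)
    (hsum : ε1 + ε2 < 1)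
    (n N1 N2 : ℕ) (C : Code X Y Z n N1 N2)
    (S : Set ((Fin n → X) × (Fin n → Y)))
    (hS_sub : ∀ p ∈ S, C.g1 (C.f1 p.1) p.2 = true)
    (hS_prob : (1 - ε1 - ε2) / 2 ≤ ∑ p, if p ∈ S then prodXY P p else 0)
    (Pt : (Fin n → X) × (Fin n → Y) → ℝ)
    (hPt : ∀ p, Pt p = (if p ∈ S then prodXY P p else 0) /
      (∑ q, if q ∈ S then prodXY P q else 0)) :
    -Real.log (beta2relay P C)
      ≤ MIof Pt (fun p => C.f1 p.1) (fun p => p.2)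
        + 2 * Real.log (2 / (1 - ε1 - ε2)) := by
  have hδ : 0 < (1 - ε1 - ε2) / 2 := by linarith
  have hQ : ∀ p : (Fin n → X) × (Fin n → Y), 0 ≤ prodXY P p := fun p =>
    prod_nonneg fun i _ => pushf_nonneg hP.1 _ _
  obtain rfl : Pt = condOn (prodXY P) S := funext hPt
  have hMI := neg_log_le_MIof_condOn hQ (hδ.trans_le hS_prob) C.f1
    (T := univ.filter fun w => C.g1 w.1 w.2 = true) fun p hp => by simpa using hS_sub p hp
  rw [← beta2relay_eq_sum_marginals] at hMI
  have hlog : Real.log (2 / (1 - ε1 - ε2)) = -Real.log ((1 - ε1 - ε2) / 2) := by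
    rw [← Real.log_inv, inv_div]
  linarith [Real.log_le_log hδ hS_prob]

/-- **Change-of-measure bound on the relay type-II exponent.**
If `S ⊆ D_{Y,n}` has `P_XY^n(S) ≥ (1−ε1−ε2)/2` and `P̃` is the conditional
distribution of `P_XY^n` given `S`, with `M̃1 := f1(X̃ⁿ)`, then
`−log β2 ≤ I(M̃1; Ỹⁿ) + 2·log(2/(1−ε1−ε2))`. -/
theorem relay_exponent_bound
    (X Y Z : Type) [Fintype X] [Fintype Y] [Fintype Z]
    [Nonempty X] [Nonempty Y] [Nonempty Z]
    (P : X × Y × Z → ℝ) (hP : IsPMF P) (hMarkov : SourceMarkov P)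
    (ε1 ε2 : ℝ) (hε1 : ε1 ∈ Set.Ioo (0 : ℝ) 1) (hε2 : ε2 ∈ Set.Ioo (0 : ℝ) 1)
    (hsum : ε1 + ε2 < 1)
    (n N1 N2 : ℕ) (C : Code X Y Z n N1 N2)
    (S : Set ((Fin n → X) × (Fin n → Y)))
    (hS_sub : ∀ p ∈ S, C.g1 (C.f1 p.1) p.2 = true)
    (hS_prob : (1 - ε1 - ε2) / 2 ≤ ∑ p, if p ∈ S then prodXY P p else 0)
    (Pt : (Fin n → X) × (Fin n → Y) → ℝ)
    (hPt : ∀ p, Pt p = (if p ∈ S then prodXY P p else 0) /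
      (∑ q, if q ∈ S then prodXY P q else 0)) :
    -Real.log (beta2relay P C)
      ≤ MIof Pt (fun p => C.f1 p.1) (fun p => p.2)
        + 2 * Real.log (2 / (1 - ε1 - ε2)) :=
  relay_exponent_bound_general X Y Z P hP ε1 ε2 hsum n N1 N2 C S hS_sub hS_prob Pt hPt

end
end

section
/- Let Y be a finite nonempty set, let P_Y be a pmf on Y, let μ := (min_{y : P_Y(y)>0} P_Y(y))^{-1}, let ε ∈ (0,1), and for n ∈ ℕ let θ_n := √((3μ/n)·log(8|Y|/ε)). Then for every n such that θ_n ≤ 1, the n-fold i.i.d. product P_Y^n satisfies P_Y^n( { y^n ∈ Y^n : |P̂_{y^n}(y) − P_Y(y)| ≤ θ_n·P_Y(y) for all y ∈ Y } ) ≥ 1 − ε/4, where P̂_{y^n}(y) := (1/n)·|{i : y_i = y}| is the empirical distribution of y^n. -/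
open scoped BigOperators Classical

noncomputable section

/-- Empirical distribution (type) of a sequence `y ∈ Y^n`. -/
def empDist {Y : Type} [Fintype Y] {n : ℕ} (y : Fin n → Y) (a : Y) : ℝ :=
  ((Finset.univ.filter fun i => y i = a).card : ℝ) / n

end

/-! For each letter `a` with `p = P_Y(a) > 0`, the count of `a` in `y^n` is a sum of `n`
independent Bernoulli(`p`) variables, so the exponential Markov inequality with the moment
generating function `(1 + p(eˢ - 1))ⁿ ≤ exp(n p (s + 3s²/4))` (valid for `|s| ≤ 1`) bounds each
relative deviation tail by `exp(-n p θ²/3) ≤ exp(-log(8|Y|/ε))`, since `p μ ≥ 1`. Letters with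
`P_Y(a) = 0` never occur. Two tails per letter and a union bound over the `|Y|` letters lose at
most `ε/4`. -/

open Finset Real

theorem exp_le_one_add_add_three_quarters_mul_sq {x : ℝ} (hx : |x| ≤ 1) :
    exp x ≤ 1 + x + 3 / 4 * x ^ 2 := by
  have h := Real.exp_bound hx (n := 2) (by norm_num)
  norm_num [Finset.sum_range_succ, sq_abs] at h
  linarith [(abs_le.mp h).2]

theorem one_add_mul_exp_sub_one_le {p s : ℝ} (hp : 0 ≤ p) (hs : |s| ≤ 1) :
    1 + p * (exp s - 1) ≤ exp (p * (s + 3 / 4 * s ^ 2)) := by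
  have hexp := exp_le_one_add_add_three_quarters_mul_sq hs
  calc 1 + p * (exp s - 1) ≤ p * (s + 3 / 4 * s ^ 2) + 1 := by nlinarith
    _ ≤ exp (p * (s + 3 / 4 * s ^ 2)) := add_one_le_exp _

section Weighted

variable {Ω ι : Type*} [Fintype Ω] [Fintype ι] {w : Ω → ℝ}

theorem sum_ite_le_exp_neg_mul_sum_mul_exp (hw : ∀ ω, 0 ≤ w ω) (X : Ω → ℝ) (c : ℝ) :
    ∑ ω, (if c ≤ X ω then w ω else 0) ≤ exp (-c) * ∑ ω, w ω * exp (X ω) := by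
  rw [mul_sum]
  refine sum_le_sum fun ω _ => ?_
  split_ifs with h
  · calc w ω ≤ w ω * exp (X ω - c) :=
          le_mul_of_one_le_right (hw ω) (one_le_exp (by linarith))
      _ = exp (-c) * (w ω * exp (X ω)) := by rw [sub_eq_add_neg, exp_add]; ring
  · exact mul_nonneg (exp_pos _).le (mul_nonneg (hw ω) (exp_pos _).le)

theorem sum_sub_sum_sum_ite_not_le_sum_ite_forall (hw : ∀ ω, 0 ≤ w ω) (E : ι → Ω → Prop) :
    ∑ ω, w ω - ∑ a, ∑ ω, (if ¬ E a ω then w ω else 0) ≤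
      ∑ ω, if ∀ a, E a ω then w ω else 0 := by
  rw [sum_comm, sub_le_iff_le_add, ← sum_add_distrib]
  refine sum_le_sum fun ω _ => ?_
  by_cases h : ∀ a, E a ω
  · rw [if_pos h, le_add_iff_nonneg_right]
    exact sum_nonneg fun a _ => by split_ifs <;> simp [hw ω]
  · obtain ⟨a, ha⟩ := not_forall.mp h
    rw [if_neg h, zero_add]
    calc w ω = if ¬ E a ω then w ω else 0 := (if_pos ha).symm
      _ ≤ ∑ b, if ¬ E b ω then w ω else 0 :=
        single_le_sum (f := fun b => if ¬ E b ω then w ω else 0)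
          (fun b _ => by split_ifs <;> simp [hw ω]) (mem_univ a)

end Weighted

section Product

variable {Y : Type} [Fintype Y] {n : ℕ} {PY : Y → ℝ}

theorem IsPMF.le_one (hP : IsPMF PY) (a : Y) : PY a ≤ 1 :=
  hP.2 ▸ single_le_sum (fun b _ => hP.1 b) (mem_univ a)

theorem IsPMF.sum_prod_eq_one (hP : IsPMF PY) : ∑ y : Fin n → Y, ∏ i, PY (y i) = 1 := by
  rw [← Fintype.sum_pow, hP.2, one_pow]

theorem natCast_mul_empDist (y : Fin n → Y) (a : Y) :
    (n : ℝ) * empDist y a = ∑ i, if y i = a then 1 else 0 := by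
  rw [← natCast_card_filter, empDist]
  rcases n.eq_zero_or_pos with rfl | hn
  · simp
  · field_simp

theorem sum_prod_mul_exp_mul_empDist (hP : IsPMF PY) (a : Y) (s : ℝ) :
    ∑ y : Fin n → Y, (∏ i, PY (y i)) * exp (s * (n * empDist y a)) =
      (1 + PY a * (exp s - 1)) ^ n := by
  have hsingle : ∀ b, PY b * exp (s * if b = a then 1 else 0) =
      PY b + if b = a then PY a * (exp s - 1) else 0 := by
    intro b
    split_ifs with h
    · subst h; ring
    · simp
  have hfactor : ∀ y : Fin n → Y, (∏ i, PY (y i)) * exp (s * (n * empDist y a)) =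
      ∏ i, PY (y i) * exp (s * if y i = a then 1 else 0) := by
    intro y
    rw [natCast_mul_empDist, mul_sum, exp_sum, prod_mul_distrib]
  rw [sum_congr rfl fun y _ => hfactor y,
    ← Fintype.sum_pow fun b => PY b * exp (s * if b = a then 1 else 0)]
  simp only [hsingle, sum_add_distrib, hP.2, sum_ite_eq', mem_univ, if_true]

theorem sum_ite_le_mul_empDist_le (hP : IsPMF PY) (a : Y) {t : ℝ} (ht : |t| ≤ 1) (c : ℝ) :
    ∑ y : Fin n → Y, (if c ≤ t * (n * empDist y a) then ∏ i, PY (y i) else 0) ≤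
      exp (n * PY a * (t + 3 / 4 * t ^ 2) - c) := by
  have hw : ∀ y : Fin n → Y, 0 ≤ ∏ i, PY (y i) := fun y => prod_nonneg fun i _ => hP.1 _
  have hmgf_base : 0 ≤ 1 + PY a * (exp t - 1) := by
    nlinarith [exp_pos t, hP.1 a, hP.le_one a]
  calc _ ≤ exp (-c) * ∑ y : Fin n → Y, (∏ i, PY (y i)) * exp (t * (n * empDist y a)) :=
        sum_ite_le_exp_neg_mul_sum_mul_exp hw _ c
    _ = exp (-c) * (1 + PY a * (exp t - 1)) ^ n := by rw [sum_prod_mul_exp_mul_empDist hP]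
    _ ≤ exp (-c) * exp (PY a * (t + 3 / 4 * t ^ 2)) ^ n := by
        gcongr
        exact one_add_mul_exp_sub_one_le (hP.1 a) ht
    _ = exp (n * PY a * (t + 3 / 4 * t ^ 2) - c) := by
        rw [← exp_nat_mul, ← exp_add]
        ring_nf

theorem sum_ite_lt_abs_empDist_sub_le (hP : IsPMF PY) (a : Y) {θ : ℝ} (hθ0 : 0 ≤ θ)
    (hθ1 : θ ≤ 1) :
    ∑ y : Fin n → Y, (if θ * PY a < |empDist y a - PY a| then ∏ i, PY (y i) else 0) ≤
      2 * exp (-(n * PY a * θ ^ 2 / 3)) := by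
  set s := 2 * θ / 3 with hs_def
  have hs0 : 0 ≤ s := by positivity
  have hs : |s| ≤ 1 := by rw [abs_of_nonneg hs0]; linarith
  have htails : ∀ y : Fin n → Y, θ * PY a < |empDist y a - PY a| →
      s * (n * (PY a * (1 + θ))) ≤ s * (n * empDist y a) ∨
        -s * (n * (PY a * (1 - θ))) ≤ -s * (n * empDist y a) := by
    intro y h
    rcases lt_abs.mp h with h | h
    · left; gcongr; linarith
    · right; rw [neg_mul, neg_mul, neg_le_neg_iff]; gcongr; linarith
  -- With s = 2θ/3 both Chernoff exponents below equal -npθ²/3.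
  calc _ ≤ ∑ y : Fin n → Y,
        ((if s * (n * (PY a * (1 + θ))) ≤ s * (n * empDist y a) then ∏ i, PY (y i) else 0) +
          (if -s * (n * (PY a * (1 - θ))) ≤ -s * (n * empDist y a) then ∏ i, PY (y i) else 0)) :=
        by
        refine sum_le_sum fun y _ => ?_
        have hw : 0 ≤ ∏ i, PY (y i) := prod_nonneg fun i _ => hP.1 _
        split_ifs with h <;> first | linarith | exact absurd (htails y h) (by tauto)
    _ = _ := sum_add_distrib
    _ ≤ exp (n * PY a * (s + 3 / 4 * s ^ 2) - s * (n * (PY a * (1 + θ)))) +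
          exp (n * PY a * (-s + 3 / 4 * (-s) ^ 2) - -s * (n * (PY a * (1 - θ)))) :=
        add_le_add (sum_ite_le_mul_empDist_le hP a hs _)
          (sum_ite_le_mul_empDist_le hP a (by rwa [abs_neg]) _)
    _ = 2 * exp (-(n * PY a * θ ^ 2 / 3)) := by
        rw [two_mul, hs_def]
        congr 2 <;> ring

theorem sum_ite_lt_abs_empDist_sub_eq_zero {a : Y} (hPa : PY a = 0) (θ : ℝ) :
    ∑ y : Fin n → Y, (if θ * PY a < |empDist y a - PY a| then ∏ i, PY (y i) else 0) = 0 := by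
  refine sum_eq_zero fun y _ => ite_eq_right_iff.mpr fun h => ?_
  obtain ⟨i, hi⟩ : ∃ i, y i = a := by
    by_contra! hne
    simp [hPa, empDist, hne] at h
  exact prod_eq_zero (mem_univ i) (by rw [hi, hPa])

theorem sum_ite_lt_abs_empDist_sub_le_exp_neg (hP : IsPMF PY) {θ L : ℝ} (hθ0 : 0 ≤ θ)
    (hθ1 : θ ≤ 1) (hL : ∀ b, 0 < PY b → 3 * L ≤ n * PY b * θ ^ 2) (a : Y) :
    ∑ y : Fin n → Y, (if θ * PY a < |empDist y a - PY a| then ∏ i, PY (y i) else 0) ≤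
      2 * exp (-L) := by
  rcases (hP.1 a).eq_or_lt with h | h
  · rw [sum_ite_lt_abs_empDist_sub_eq_zero h.symm]
    positivity
  · calc _ ≤ 2 * exp (-(n * PY a * θ ^ 2 / 3)) := sum_ite_lt_abs_empDist_sub_le hP a hθ0 hθ1
      _ ≤ 2 * exp (-L) := by gcongr; linarith [hL a h]

end Product

theorem three_mul_le_natCast_mul_mul_sqrt_sq {n : ℕ} (hn : 0 < n) {μ L p : ℝ} (hμ : 0 < μ)
    (hL : 0 ≤ L) (hp : μ⁻¹ ≤ p) : 3 * L ≤ n * p * sqrt (3 * μ / n * L) ^ 2 := by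
  have hμp : 1 ≤ μ * p := by rwa [inv_le_iff_one_le_mul₀ hμ, mul_comm] at hp
  have hn' : (0 : ℝ) < n := by exact_mod_cast hn
  rw [sq_sqrt (by positivity),
    show (n : ℝ) * p * (3 * μ / n * L) = 3 * L * (μ * p) by field_simp]
  nlinarith

/-- **Chernoff bound for the typical set.** With
`θ_n = √((3μ/n)·log(8|Y|/ε))` and `μ = (min_{P_Y(y)>0} P_Y(y))⁻¹`, for every
`n ≥ 1` with `θ_n ≤ 1` the typical set has `P_Y^n`-probability at least
`1 − ε/4`.  (The restriction `n ≥ 1` reflects that `θ_n` is only defined for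
positive `n`.) -/
theorem typical_set_probability
    (Y : Type) [Fintype Y] [Nonempty Y]
    (PY : Y → ℝ) (hPY : IsPMF PY)
    (μ : ℝ) (hμ : IsLeast {r : ℝ | ∃ y, 0 < PY y ∧ PY y = r} μ⁻¹)
    (ε : ℝ) (hε : ε ∈ Set.Ioo (0 : ℝ) 1)
    (n : ℕ) (hn : 0 < n)
    (hθ : Real.sqrt ((3 * μ / n) * Real.log (8 * (Fintype.card Y : ℝ) / ε)) ≤ 1) :
    1 - ε / 4 ≤
      ∑ y : Fin n → Y,
        if (∀ a : Y, |empDist y a - PY a| ≤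
            Real.sqrt ((3 * μ / n) * Real.log (8 * (Fintype.card Y : ℝ) / ε))
              * PY a) then
          ∏ i, PY (y i)
        else 0 := by
  obtain ⟨hε0, hε1⟩ := hε
  set L := log (8 * (Fintype.card Y : ℝ) / ε)
  set θ := sqrt ((3 * μ / n) * L)
  have hμ0 : 0 < μ := by
    obtain ⟨b, hb, hbμ⟩ := hμ.1
    exact inv_pos.mp (hbμ ▸ hb)
  have hcard : (1 : ℝ) ≤ Fintype.card Y := by exact_mod_cast Fintype.card_pos
  have hL0 : 0 < L := log_pos (by rw [lt_div_iff₀ hε0]; linarith)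
  have hdev : ∀ b, 0 < PY b → 3 * L ≤ n * PY b * θ ^ 2 := fun b hb =>
    three_mul_le_natCast_mul_mul_sqrt_sq hn hμ0 hL0.le (hμ.2 ⟨b, hb, rfl⟩)
  have hexpL : 2 * exp (-L) = ε / (4 * Fintype.card Y) := by
    rw [exp_neg, exp_log (by positivity)]
    field_simp
    ring
  calc 1 - ε / 4 = ∑ y : Fin n → Y, ∏ i, PY (y i) - ∑ _a : Y, 2 * exp (-L) := by
        rw [hPY.sum_prod_eq_one, sum_const, card_univ, hexpL, nsmul_eq_mul]
        field_simp
    _ ≤ ∑ y : Fin n → Y, ∏ i, PY (y i) - ∑ a : Y, ∑ y : Fin n → Y,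
          (if ¬ |empDist y a - PY a| ≤ θ * PY a then ∏ i, PY (y i) else 0) := by
        gcongr with a
        simpa only [not_le] using
          sum_ite_lt_abs_empDist_sub_le_exp_neg hPY (sqrt_nonneg _) hθ hdev a
    _ ≤ _ := sum_sub_sum_sum_ite_not_le_sum_ite_forall
        (fun y => prod_nonneg fun i _ => hPY.1 _) _
end

section
/- Let X be a finite nonempty set, let P be a pmf on X, let n ∈ ℕ, and let P̃ be a pmf on X^n that is absolutely continuous with respect to the n-fold product P^n. Then H(P̃) + D(P̃‖P^n) = Σ_{j=1}^n ( H(P̃_j) + D(P̃_j‖P) ), where P̃_j denotes the j-th coordinate marginal of P̃. -/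
open scoped BigOperators Classical

noncomputable section

/-- Shannon entropy of a pmf on a finite set (natural log). -/
def entropy {Ω : Type} [Fintype Ω] (P : Ω → ℝ) : ℝ :=
  -∑ ω, P ω * Real.log (P ω)

end

/-
Where `P̃ ω ≠ 0`, the logarithm of `P̃ ω / Pⁿ ω` splits, so `H(P̃) + D(P̃‖Pⁿ)` is the cross entropy
`-Σ P̃ ω log Pⁿ ω`; likewise for each marginal. Since `log Pⁿ ω = Σ_j log P (ω j)` on the support of
`P̃`, the cross entropy of `P̃` is the sum over `j` of the cross entropies of its marginals.
-/

theorem entropy_add_KL_eq_neg_sum_mul_log {Ω : Type} [Fintype Ω] (R Q : Ω → ℝ)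
    (hRQ : ∀ ω, R ω ≠ 0 → Q ω ≠ 0) :
    entropy R + KL R Q = -∑ ω, R ω * Real.log (Q ω) := by
  rw [entropy, KL, neg_add_eq_sub, ← Finset.sum_sub_distrib, ← Finset.sum_neg_distrib]
  refine Finset.sum_congr rfl fun ω _ => ?_
  by_cases hR : R ω = 0
  · simp [hR]
  · rw [Real.log_div hR (hRQ ω hR)]
    ring

theorem sum_pushf_mul {Ω A : Type} [Fintype Ω] [Fintype A] (R : Ω → ℝ) (φ : Ω → A)
    (f : A → ℝ) : ∑ a, pushf R φ a * f a = ∑ ω, R ω * f (φ ω) := by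
  simp only [pushf, Finset.sum_mul, ite_mul, zero_mul]
  rw [Finset.sum_comm]
  simp

theorem ne_zero_of_pushf_ne_zero {Ω A : Type} [Fintype Ω] {R : Ω → ℝ} {Q : A → ℝ}
    {φ : Ω → A} (hRQ : ∀ ω, R ω ≠ 0 → Q (φ ω) ≠ 0) {a : A} (h : pushf R φ a ≠ 0) :
    Q a ≠ 0 := by
  obtain ⟨ω, -, hω⟩ := Finset.exists_ne_zero_of_sum_ne_zero h
  by_cases hφ : φ ω = a
  · rw [if_pos hφ] at hω
    exact hφ ▸ hRQ ω hω
  · exact absurd (if_neg hφ) hω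

theorem entropy_plus_kl_tensorization_general
    (X : Type) [Fintype X]
    (P : X → ℝ)
    (n : ℕ)
    (Pt : (Fin n → X) → ℝ)
    (hac : ∀ ω : Fin n → X, (∏ i, P (ω i)) = 0 → Pt ω = 0) :
    entropy Pt + KL Pt (fun ω => ∏ i, P (ω i))
      = ∑ j : Fin n,
          (entropy (pushf Pt fun ω => ω j) + KL (pushf Pt fun ω => ω j) P) := by
  have hcoord : ∀ ω, Pt ω ≠ 0 → ∀ i, P (ω i) ≠ 0 := fun ω hω i hPi =>
    hω (hac ω (Finset.prod_eq_zero (Finset.mem_univ i) hPi))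
  have hprod : ∀ ω, Pt ω ≠ 0 → ∏ i, P (ω i) ≠ 0 := fun ω hω =>
    Finset.prod_ne_zero_iff.2 fun i _ => hcoord ω hω i
  have hmarg : ∀ j x, pushf Pt (fun ω => ω j) x ≠ 0 → P x ≠ 0 := fun j _ =>
    ne_zero_of_pushf_ne_zero fun ω hω => hcoord ω hω j
  simp only [entropy_add_KL_eq_neg_sum_mul_log _ _ hprod,
    entropy_add_KL_eq_neg_sum_mul_log _ _ (hmarg _), sum_pushf_mul]
  rw [Finset.sum_neg_distrib, neg_inj, Finset.sum_comm]
  refine Finset.sum_congr rfl fun ω _ => ?_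
  by_cases hω : Pt ω = 0
  · simp [hω]
  · rw [Real.log_prod fun i _ => hcoord ω hω i, Finset.mul_sum]

/-- **Tensorization identity (Tyagi–Watanabe, Prop. 1).**
For any pmf `P̃` on `Xⁿ` absolutely continuous w.r.t. `Pⁿ`,
`H(P̃) + D(P̃‖Pⁿ) = Σ_j (H(P̃_j) + D(P̃_j‖P))`. -/
theorem entropy_plus_kl_tensorization
    (X : Type) [Fintype X] [Nonempty X]
    (P : X → ℝ) (hP : IsPMF P)
    (n : ℕ)
    (Pt : (Fin n → X) → ℝ) (hPt : IsPMF Pt)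
    (hac : ∀ ω : Fin n → X, (∏ i, P (ω i)) = 0 → Pt ω = 0) :
    entropy Pt + KL Pt (fun ω => ∏ i, P (ω i))
      = ∑ j : Fin n,
          (entropy (pushf Pt fun ω => ω j) + KL (pushf Pt fun ω => ω j) P) :=
  entropy_plus_kl_tensorization_general X P n Pt hac
end
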